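/- Every invertible 2×2 matrix g over the finite field F_q satisfies g^{q(q²−1)} = 1. -/

import Mathlib

/-!
Every irreducible factor of the characteristic polynomial of `A ∈ Mₙ(𝔽_q)` has degree at most `n`,
hence divides `X ^ q ^ n! - X`; by Cayley–Hamilton `(A ^ q ^ n! - A) ^ n = 0`. Raising this to a
power `q ^ k ≥ n`, the Frobenius `x ↦ x ^ q ^ k` is additive on powers of `A`, so
`A ^ (q ^ n! * q ^ k) = A ^ q ^ k`. For `n = 2`, `k = 1` this is `g ^ q³ = g ^ q` in `GL₂(𝔽_q)`.
-/

open Polynomial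

theorem pow_mul_pow_expChar_pow_eq_of_pow_sub_self_pow_eq_zero {R : Type*} [Ring R] (p : ℕ)
    [ExpChar R p] {x : R} {m n k : ℕ} (h : (x ^ m - x) ^ n = 0) (hn : n ≤ p ^ k) :
    x ^ (m * p ^ k) = x ^ p ^ k := by
  have : (x ^ m - x) ^ p ^ k = 0 := pow_eq_zero_of_le hn h
  rwa [sub_pow_expChar_pow_of_commute p k (Commute.pow_self x m), sub_eq_zero, ← pow_mul] at this

section FiniteField

variable {K : Type*} [Field K] [Fintype K] {n : Type*} [Fintype n] [DecidableEq n]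

theorem Polynomial.dvd_X_pow_card_pow_factorial_sub_X_pow_natDegree {f : K[X]} (hf : f ≠ 0) :
    f ∣ (X ^ Fintype.card K ^ f.natDegree.factorial - X) ^ f.natDegree := by
  induction f using WfDvdMonoid.induction_on_irreducible with
  | zero => exact absurd rfl hf
  | unit u hu => simp [natDegree_eq_zero_of_isUnit hu, hu.dvd]
  | mul a i ha hi ih =>
    rw [natDegree_mul hi.ne_zero ha]
    set d := i.natDegree + a.natDegree
    have hi_dvd : i ∣ X ^ Fintype.card K ^ d.factorial - X := by
      rw [Fintype.card_eq_nat_card, ← hi.natDegree_dvd_iff_dvd_X_pow_card_pow_sub_X]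
      exact Nat.dvd_factorial hi.natDegree_pos (Nat.le_add_right _ _)
    have ha_dvd : a ∣ (X ^ Fintype.card K ^ d.factorial - X) ^ a.natDegree :=
      (ih ha).trans <| pow_dvd_pow_of_dvd
        (dvd_pow_pow_sub_self_of_dvd (Nat.factorial_dvd_factorial (Nat.le_add_left _ _))) _
    calc i * a ∣ (X ^ Fintype.card K ^ d.factorial - X) ^ (1 + a.natDegree) := by
          rw [pow_add, pow_one]
          exact mul_dvd_mul hi_dvd ha_dvd
      _ ∣ _ := pow_dvd_pow _ (by have := hi.natDegree_pos; omega)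

theorem Matrix.pow_card_pow_factorial_sub_self_pow_card_eq_zero (A : Matrix n n K) :
    (A ^ Fintype.card K ^ (Fintype.card n).factorial - A) ^ Fintype.card n = 0 := by
  obtain ⟨c, hc⟩ := A.charpoly_natDegree_eq_dim ▸
    dvd_X_pow_card_pow_factorial_sub_X_pow_natDegree A.charpoly_monic.ne_zero
  simpa [A.aeval_self_charpoly] using congrArg (aeval A) hc

theorem Matrix.pow_card_pow_factorial_mul_card_pow {k : ℕ}
    (hk : Fintype.card n ≤ Fintype.card K ^ k) (A : Matrix n n K) :
    A ^ (Fintype.card K ^ (Fintype.card n).factorial * Fintype.card K ^ k) =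
      A ^ Fintype.card K ^ k := by
  -- over an empty index type the matrix ring is trivial and does not have characteristic `p`
  cases isEmpty_or_nonempty n
  · exact Subsingleton.elim _ _
  obtain ⟨p, _, r, hp, hK⟩ := FiniteField.card' K
  have : Fact p.Prime := ⟨hp⟩
  have hqk : Fintype.card K ^ k = p ^ (r * k) := by rw [hK, pow_mul]
  rw [hqk] at hk ⊢
  exact pow_mul_pow_expChar_pow_eq_of_pow_sub_self_pow_eq_zero p
    A.pow_card_pow_factorial_sub_self_pow_card_eq_zero hk

theorem Matrix.GeneralLinearGroup.pow_card_pow_mul_card_pow_factorial_sub_one_eq_one {k : ℕ}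
    (hk : Fintype.card n ≤ Fintype.card K ^ k) (g : GL n K) :
    g ^ (Fintype.card K ^ k * (Fintype.card K ^ (Fintype.card n).factorial - 1)) = 1 := by
  set q := Fintype.card K
  have hg : g ^ (q ^ (Fintype.card n).factorial * q ^ k) = g ^ q ^ k :=
    Units.ext <| by simpa using Matrix.pow_card_pow_factorial_mul_card_pow hk (g : Matrix n n K)
  rw [Nat.mul_sub_one, mul_comm, pow_sub _ (Nat.le_mul_of_pos_left _ (by positivity)), hg,
    mul_inv_cancel]

end FiniteField

theorem GL2_pow_exponent (F : Type*) [Field F] [Fintype F] (q : ℕ)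
    (hq : Fintype.card F = q) (g : GL (Fin 2) F) :
    g ^ (q * (q ^ 2 - 1)) = 1 := by
  subst hq
  simpa using Matrix.GeneralLinearGroup.pow_card_pow_mul_card_pow_factorial_sub_one_eq_one
    (k := 1) (by rw [pow_one]; exact Fintype.one_lt_card) g
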